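/- Let n = p0+p1+p2+p3+p4-3, let A be the Batyrev matrix determined by integers p0,p1,p2,p3,p4 ≥ 1 and nonnegative integers b_1,…,b_{p3}, c_2,…,c_{p2}, and let d,e,f be nonnegative integers with normalized height vector h = h(d,e,f). For every α ∈ ℤ^J with α_j ≥ 0 for all j ∈ J and Σ_{j∈J} α_j ≤ e+f, the slice of P(A,h) at α, namely {y ∈ ℝ^S : (y, α) ∈ P(A,h)} (identifying ℝ^n = ℝ^S × ℝ^J), is a lattice polytope: it equals the convex hull (over ℝ) of its set of points in ℤ^S. -/

import Mathlib

/-!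
Listing the coordinates of `ℝ^S` in the order `u, v, y`, the slice at `α` is cut out by lower
bounds `x_s ≥ L_s` and by `∑ v + ∑ u ≤ F`, `∑ v + ∑ y ≤ G` with integers `L_s, F, G`: each
constraint bounds a difference `P_q - P_p` of prefix sums of `x` by an integer. Replacing every
prefix sum `P_k` by `⌈P_k - t⌉` gives an integer point `r_t` satisfying the same constraints,
with `⌊x_s⌋ ≤ r_t s ≤ ⌈x_s⌉`, so only finitely many points `r_t` occur. By Hermite's identity the
average of `r_{j/N}` over `j < N` has coordinates `(⌈N P_{k+1}⌉ - ⌈N P_k⌉) / N`, which tend to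
`x`; hence `x` lies in the closed convex hull of finitely many integer points of the slice.
-/

open Finset Pointwise

/-- Column index type for the Batyrev matrix:
left part `S = {v₁,…,v_{p0}, u₂,…,u_{p4}, y₂,…,y_{p1}}`,
right part `J = {t₁,…,t_{p3}, z₂,…,z_{p2}}`. -/
abbrev BCol (p0 p1 p2 p3 p4 : ℕ) :=
  (Fin p0 ⊕ (Fin (p4 - 1) ⊕ Fin (p1 - 1))) ⊕ (Fin p3 ⊕ Fin (p2 - 1))

/-- Row index type: `v₁,…,v_{p0}`, `u₁,…,u_{p4}` (index 0 is u₁),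
`y₁,…,y_{p1}` (index 0 is y₁), `t₁,…,t_{p3}`, `z₁,…,z_{p2}` (index 0 is z₁). -/
abbrev BRow (p0 p1 p2 p3 p4 : ℕ) :=
  Fin p0 ⊕ (Fin p4 ⊕ (Fin p1 ⊕ (Fin p3 ⊕ Fin p2)))

/-- The Batyrev matrix. -/
def batyrevA (p0 p1 p2 p3 p4 : ℕ) (b : Fin p3 → ℤ) (c : Fin (p2 - 1) → ℤ) :
    BRow p0 p1 p2 p3 p4 → BCol p0 p1 p2 p3 p4 → ℤ
  | .inl i, .inl (.inl i') => if (i : ℕ) = (i' : ℕ) then 1 else 0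
  | .inl _, _ => 0
  | .inr (.inl j), .inl (.inl _) => if (j : ℕ) = 0 then -1 else 0
  | .inr (.inl j), .inl (.inr (.inl j')) =>
      if (j : ℕ) = 0 then -1 else if (j : ℕ) = (j' : ℕ) + 1 then 1 else 0
  | .inr (.inl _), .inl (.inr (.inr _)) => 0
  | .inr (.inl j), .inr (.inl i) => if (j : ℕ) = 0 then b i else 0
  | .inr (.inl j), .inr (.inr k) => if (j : ℕ) = 0 then c k else 0
  | .inr (.inr (.inl j)), .inl (.inl _) => if (j : ℕ) = 0 then -1 else 0
  | .inr (.inr (.inl _)), .inl (.inr (.inl _)) => 0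
  | .inr (.inr (.inl j)), .inl (.inr (.inr j')) =>
      if (j : ℕ) = 0 then -1 else if (j : ℕ) = (j' : ℕ) + 1 then 1 else 0
  | .inr (.inr (.inl j)), .inr (.inl i) => if (j : ℕ) = 0 then b i + 1 else 0
  | .inr (.inr (.inl j)), .inr (.inr k) => if (j : ℕ) = 0 then c k else 0
  | .inr (.inr (.inr (.inl i))), .inr (.inl i') => if (i : ℕ) = (i' : ℕ) then 1 else 0
  | .inr (.inr (.inr (.inl _))), _ => 0
  | .inr (.inr (.inr (.inr j))), .inr (.inl _) => if (j : ℕ) = 0 then -1 else 0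
  | .inr (.inr (.inr (.inr j))), .inr (.inr j') =>
      if (j : ℕ) = 0 then -1 else if (j : ℕ) = (j' : ℕ) + 1 then 1 else 0
  | .inr (.inr (.inr (.inr _))), .inl _ => 0

/-- The normalized height vector `h(d,e,f)`: entry `d` at `v₁`, `f` at `u₁`,
`e+f` at `z₁`, and `0` elsewhere. -/
def batyrevH (p0 p1 p2 p3 p4 : ℕ) (d e f : ℤ) : BRow p0 p1 p2 p3 p4 → ℤ
  | .inl i => if (i : ℕ) = 0 then d else 0
  | .inr (.inl j) => if (j : ℕ) = 0 then f else 0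
  | .inr (.inr (.inr (.inr j))) => if (j : ℕ) = 0 then e + f else 0
  | _ => 0

/-- `P(A,h) = {x ∈ ℝⁿ : (Ax)ᵢ ≥ -hᵢ}`. -/
def polyP {ι κ : Type*} [Fintype κ] (A : ι → κ → ℤ) (h : ι → ℤ) : Set (κ → ℝ) :=
  {x | ∀ i, -(h i : ℝ) ≤ ∑ j, (A i j : ℝ) * x j}

/-- The set of integral points of `ℝ^κ`. -/
def intZ {κ : Type*} : Set (κ → ℝ) := {x | ∀ j, ∃ k : ℤ, x j = (k : ℝ)}

open Filter Topology

def IsLatticeHull {κ : Type*} (P : Set (κ → ℝ)) : Prop := P = convexHull ℝ (P ∩ intZ)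

lemma ceil_sub_ceil_mem_Icc (a b : ℝ) : ⌈a⌉ - ⌈b⌉ ∈ Set.Icc ⌊a - b⌋ ⌈a - b⌉ := by
  have := Int.le_ceil a
  have := Int.ceil_lt_add_one a
  have := Int.le_ceil b
  have := Int.ceil_lt_add_one b
  constructor
  · rw [Int.floor_le_iff]; push_cast; linarith
  · rw [Int.le_ceil_iff]; push_cast; linarith

lemma ceil_sub_eq_floor_add_ite {s r : ℝ} (hr0 : 0 ≤ r) (hr1 : r < 1) :
    ⌈s - r⌉ = ⌊s⌋ + if r < Int.fract s then 1 else 0 := by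
  have hs : s - r = (Int.fract s - r) + ⌊s⌋ := by rw [← Int.self_sub_floor]; ring
  have := Int.fract_nonneg s
  have := Int.fract_lt_one s
  rw [hs, Int.ceil_add_intCast, add_comm]
  congr 1
  split_ifs <;> rw [Int.ceil_eq_iff] <;> constructor <;> push_cast <;> linarith

/-- The ceiling form of Hermite's identity. -/
lemma sum_range_ceil_sub_div (s : ℝ) {N : ℕ} (hN : N ≠ 0) :
    ∑ j ∈ Finset.range N, ⌈s - j / N⌉ = ⌈N * s⌉ := by
  have hN' : (0 : ℝ) < N := by positivity
  have hfract := Int.fract_lt_one s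
  have hterm : ∀ j ∈ Finset.range N,
      ⌈s - j / N⌉ = ⌊s⌋ + if (j : ℝ) < N * Int.fract s then 1 else 0 := by
    intro j hj
    have hjN : (j : ℝ) < N := by exact_mod_cast Finset.mem_range.1 hj
    rw [ceil_sub_eq_floor_add_ite (by positivity) ((div_lt_one hN').2 hjN)]
    simp only [div_lt_iff₀' hN']
  have hcount : (Finset.range N).filter (fun j : ℕ => (j : ℝ) < N * Int.fract s) =
      Finset.range ⌈N * Int.fract s⌉₊ := by
    have : ⌈N * Int.fract s⌉₊ ≤ N := Nat.ceil_le.2 (by nlinarith [Int.fract_nonneg s])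
    ext j
    simp only [Finset.mem_filter, Finset.mem_range, Nat.lt_ceil]
    exact ⟨And.right, fun h => ⟨(Nat.lt_ceil.2 h).trans_le this, h⟩⟩
  have hs : (N : ℝ) * s = N * Int.fract s + ((N * ⌊s⌋ : ℤ) : ℝ) := by
    rw [← Int.self_sub_floor]; push_cast; ring
  rw [Finset.sum_congr rfl hterm, Finset.sum_add_distrib, Finset.sum_boole, hcount, hs,
    Int.ceil_add_intCast, ← Int.natCast_ceil_eq_ceil (by have := Int.fract_nonneg s; positivity)]
  simp [add_comm]

lemma tendsto_ceil_mul_div (s : ℝ) :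
    Tendsto (fun N : ℕ => (⌈N * s⌉ : ℝ) / N) atTop (𝓝 s) := by
  have hupper : Tendsto (fun N : ℕ => s + 1 / (N : ℝ)) atTop (𝓝 s) := by
    simpa using tendsto_const_nhds.add (tendsto_one_div_atTop_nhds_zero_nat (𝕜 := ℝ))
  refine tendsto_of_tendsto_of_tendsto_of_le_of_le' tendsto_const_nhds hupper ?_ ?_ <;>
    filter_upwards [eventually_gt_atTop 0] with N hN
  · rw [le_div_iff₀ (Nat.cast_pos.2 hN), mul_comm]
    exact Int.le_ceil _
  · rw [div_le_iff₀ (Nat.cast_pos.2 hN), add_mul, one_div_mul_cancel (by positivity), mul_comm]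
    exact (Int.ceil_lt_add_one _).le

section PrefixSum

variable {ι : Type*} [Fintype ι] (pos : ι → ℕ)

noncomputable def prefixSum (x : ι → ℝ) (k : ℕ) : ℝ := ∑ i with pos i < k, x i

noncomputable def ceilRound (x : ι → ℝ) (t : ℝ) (i : ι) : ℤ :=
  ⌈prefixSum pos x (pos i + 1) - t⌉ - ⌈prefixSum pos x (pos i) - t⌉

variable {pos}

@[simp] lemma prefixSum_zero (x : ι → ℝ) : prefixSum pos x 0 = 0 := by
  simp [prefixSum]

lemma prefixSum_succ (x : ι → ℝ) (k : ℕ) :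
    prefixSum pos x (k + 1) = prefixSum pos x k + ∑ i with pos i = k, x i := by
  simp only [prefixSum, Finset.sum_filter, ← Finset.sum_add_distrib]
  refine Finset.sum_congr rfl fun i _ => ?_
  split_ifs <;> first | omega | simp

lemma isLinearMap_prefixSum_sub (p q : ℕ) :
    IsLinearMap ℝ fun x => prefixSum pos x q - prefixSum pos x p where
  map_add x y := by simp only [prefixSum, Pi.add_apply, Finset.sum_add_distrib]; ring
  map_smul r x := by simp [prefixSum, Finset.mul_sum, mul_sub]

lemma sum_filter_pos_eq (hpos : pos.Injective) (x : ι → ℝ) (i : ι) :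
    ∑ j with pos j = pos i, x j = x i :=
  Finset.sum_eq_single_of_mem i (by simp) fun j hj hji => (hji (hpos (by simpa using hj))).elim

lemma prefixSum_pos_succ_sub (hpos : pos.Injective) (x : ι → ℝ) (i : ι) :
    prefixSum pos x (pos i + 1) - prefixSum pos x (pos i) = x i := by
  rw [prefixSum_succ, sum_filter_pos_eq hpos, add_sub_cancel_left]

lemma prefixSum_ceilRound (hpos : pos.Injective) (x : ι → ℝ) (t : ℝ) (k : ℕ) :
    prefixSum pos (fun i => (ceilRound pos x t i : ℝ)) k =
      ⌈prefixSum pos x k - t⌉ - ⌈prefixSum pos x 0 - t⌉ := by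
  induction k with
  | zero => simp
  | succ k ih =>
    have hstep : ∑ i with pos i = k, (ceilRound pos x t i : ℝ) =
        ⌈prefixSum pos x (k + 1) - t⌉ - ⌈prefixSum pos x k - t⌉ := by
      by_cases hk : ∃ i, pos i = k
      · obtain ⟨i, rfl⟩ := hk
        rw [sum_filter_pos_eq hpos, ceilRound, Int.cast_sub]
      · have hempty : ({i | pos i = k} : Finset ι) = ∅ := by
          ext i; simpa using fun h => hk ⟨i, h⟩
        simp [prefixSum_succ, hempty]
    rw [prefixSum_succ, ih, hstep]
    ring

lemma prefixSum_ceilRound_sub_le (hpos : pos.Injective) {x : ι → ℝ} {p q : ℕ} {m : ℤ}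
    (h : prefixSum pos x q - prefixSum pos x p ≤ m) (t : ℝ) :
    prefixSum pos (fun i => (ceilRound pos x t i : ℝ)) q -
      prefixSum pos (fun i => (ceilRound pos x t i : ℝ)) p ≤ m := by
  rw [prefixSum_ceilRound hpos, prefixSum_ceilRound hpos, sub_sub_sub_cancel_right]
  have := (ceil_sub_ceil_mem_Icc (prefixSum pos x q - t) (prefixSum pos x p - t)).2
  rw [sub_sub_sub_cancel_right] at this
  exact_mod_cast this.trans (Int.ceil_le.2 h)

lemma ceilRound_mem_Icc (hpos : pos.Injective) (x : ι → ℝ) (t : ℝ) (i : ι) :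
    ceilRound pos x t i ∈ Set.Icc ⌊x i⌋ ⌈x i⌉ := by
  rw [ceilRound, ← prefixSum_pos_succ_sub hpos x i, ← sub_sub_sub_cancel_right _ _ t]
  exact ceil_sub_ceil_mem_Icc _ _

lemma tendsto_sum_smul_ceilRound (hpos : pos.Injective) (x : ι → ℝ) :
    Tendsto (fun N : ℕ => ∑ j ∈ Finset.range N,
      (N : ℝ)⁻¹ • fun i => (ceilRound pos x (j / N) i : ℝ)) atTop (𝓝 x) := by
  refine tendsto_pi_nhds.2 fun i => ?_
  have hlim := (tendsto_ceil_mul_div (prefixSum pos x (pos i + 1))).sub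
    (tendsto_ceil_mul_div (prefixSum pos x (pos i)))
  rw [prefixSum_pos_succ_sub hpos] at hlim
  refine hlim.congr' ?_
  filter_upwards [eventually_ne_atTop 0] with N hN
  have hermite (s : ℝ) : ∑ j ∈ Finset.range N, (⌈s - j / N⌉ : ℝ) = ⌈N * s⌉ := by
    exact_mod_cast sum_range_ceil_sub_div s hN
  simp only [Finset.sum_apply, Pi.smul_apply, smul_eq_mul, ← Finset.mul_sum, ceilRound,
    Int.cast_sub, Finset.sum_sub_distrib, hermite]
  ring

theorem isLatticeHull_of_ceilRound_mem (hpos : pos.Injective) {P : Set (ι → ℝ)}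
    (hconv : Convex ℝ P) (hround : ∀ x ∈ P, ∀ t, (fun i => (ceilRound pos x t i : ℝ)) ∈ P) :
    IsLatticeHull P := by
  refine (convexHull_min Set.inter_subset_left hconv).antisymm' fun x hx => ?_
  set W : Set (ι → ℝ) :=
    ((fun z i => (z i : ℝ)) '' Set.pi Set.univ fun i => Set.Icc ⌊x i⌋ ⌈x i⌉) ∩ P
  have hWfin : W.Finite := ((Set.Finite.pi fun i => Set.finite_Icc _ _).image _).inter_of_left _
  have hWZ : W ⊆ P ∩ intZ := by
    rintro _ ⟨⟨z, -, rfl⟩, hP⟩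
    exact ⟨hP, fun i => ⟨z i, rfl⟩⟩
  have hmem (t : ℝ) : (fun i => (ceilRound pos x t i : ℝ)) ∈ W :=
    ⟨⟨_, fun i _ => ceilRound_mem_Icc hpos x t i, rfl⟩, hround x hx t⟩
  refine convexHull_mono hWZ ((hWfin.isClosed_convexHull ℝ).mem_of_tendsto
    (tendsto_sum_smul_ceilRound hpos x) ?_)
  filter_upwards [eventually_ne_atTop 0] with N hN
  refine (convex_convexHull ℝ W).sum_mem (fun _ _ => by positivity) ?_
    fun j _ => subset_convexHull ℝ W (hmem _)
  simp [hN]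

end PrefixSum

section Slice

variable {a b c : ℕ}

def slicePolyhedron (L : Fin a ⊕ (Fin b ⊕ Fin c) → ℤ) (F G : ℤ) :
    Set (Fin a ⊕ (Fin b ⊕ Fin c) → ℝ) :=
  {y | (fun s => (L s : ℝ)) ≤ y ∧ ∑ i, y (.inl i) + ∑ j, y (.inr (.inl j)) ≤ F ∧
    ∑ i, y (.inl i) + ∑ k, y (.inr (.inr k)) ≤ G}

/-- Placing the block `Fin b` first turns both sum constraints of `slicePolyhedron` into
differences of prefix sums. -/
def sliceOrder (a b c : ℕ) : Fin a ⊕ (Fin b ⊕ Fin c) → ℕ :=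
  Sum.elim (fun i => b + i) (Sum.elim (fun j => j) (fun k => b + a + k))

lemma sliceOrder_injective : (sliceOrder a b c).Injective := by
  rintro (i | j | k) (i' | j' | k') h <;> simp [sliceOrder, Fin.ext_iff] at h ⊢ <;> omega

lemma prefixSum_sliceOrder_add (y : Fin a ⊕ (Fin b ⊕ Fin c) → ℝ) :
    prefixSum (sliceOrder a b c) y (b + a) = ∑ i, y (.inl i) + ∑ j, y (.inr (.inl j)) := by
  have hu (j : Fin b) : (j : ℕ) < b + a := by omega
  rw [prefixSum, Finset.sum_filter]
  simp [sliceOrder, Fintype.sum_sum_type, hu]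

lemma prefixSum_sliceOrder_add_add_sub (y : Fin a ⊕ (Fin b ⊕ Fin c) → ℝ) :
    prefixSum (sliceOrder a b c) y (b + a + c) - prefixSum (sliceOrder a b c) y b =
      ∑ i, y (.inl i) + ∑ k, y (.inr (.inr k)) := by
  have hv (i : Fin a) : b + (i : ℕ) < b + a + c := by omega
  have hu (j : Fin b) : (j : ℕ) < b + a + c := by omega
  have hw (k : Fin c) : ¬ b + a + (k : ℕ) < b := by omega
  unfold prefixSum
  rw [Finset.sum_filter, Finset.sum_filter]
  simp [sliceOrder, Fintype.sum_sum_type, hv, hu, hw]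
  ring

lemma slicePolyhedron_eq_setOf_prefixSum (L : Fin a ⊕ (Fin b ⊕ Fin c) → ℤ) (F G : ℤ) :
    slicePolyhedron L F G = {y | (fun s => (L s : ℝ)) ≤ y ∧
      prefixSum (sliceOrder a b c) y (b + a) - prefixSum (sliceOrder a b c) y 0 ≤ F ∧
      prefixSum (sliceOrder a b c) y (b + a + c) - prefixSum (sliceOrder a b c) y b ≤ G} := by
  simp only [slicePolyhedron, prefixSum_zero, sub_zero, prefixSum_sliceOrder_add,
    prefixSum_sliceOrder_add_add_sub]

theorem isLatticeHull_slicePolyhedron (L : Fin a ⊕ (Fin b ⊕ Fin c) → ℤ) (F G : ℤ) :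
    IsLatticeHull (slicePolyhedron L F G) := by
  have hpos := sliceOrder_injective (a := a) (b := b) (c := c)
  rw [slicePolyhedron_eq_setOf_prefixSum]
  refine isLatticeHull_of_ceilRound_mem hpos ((convex_Ici _).inter
    ((convex_halfSpace_le (isLinearMap_prefixSum_sub _ _) _).inter
      (convex_halfSpace_le (isLinearMap_prefixSum_sub _ _) _))) ?_
  rintro y ⟨hL, hF, hG⟩ t
  refine ⟨fun s => ?_, prefixSum_ceilRound_sub_le hpos hF t, prefixSum_ceilRound_sub_le hpos hG t⟩
  set r := fun i => (ceilRound (sliceOrder a b c) y t i : ℝ)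
  have hy : prefixSum (sliceOrder a b c) y (sliceOrder a b c s) -
      prefixSum (sliceOrder a b c) y (sliceOrder a b c s + 1) ≤ (-L s : ℤ) := by
    have := prefixSum_pos_succ_sub hpos y s
    push_cast
    linarith [hL s]
  have hr := prefixSum_ceilRound_sub_le hpos hy t
  have := prefixSum_pos_succ_sub hpos r s
  push_cast at hr
  show (L s : ℝ) ≤ r s
  linarith

end Slice

lemma Fin.val_eq_zero_or_exists_val_eq_succ {p : ℕ} (j : Fin p) :
    (j : ℕ) = 0 ∨ ∃ k : Fin (p - 1), (j : ℕ) = k + 1 := by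
  rcases j with ⟨_ | k, hk⟩
  · exact .inl rfl
  · exact .inr ⟨⟨k, by omega⟩, rfl⟩

section Batyrev

variable {p0 p1 p2 p3 p4 : ℕ} {b : Fin p3 → ℤ} {c : Fin (p2 - 1) → ℤ} {d e f : ℤ}
  {α : Fin p3 ⊕ Fin (p2 - 1) → ℤ}

lemma setOf_sum_elim_mem_polyP_eq_slicePolyhedron (hp1 : 1 ≤ p1) (hp4 : 1 ≤ p4)
    (hα : ∀ j, 0 ≤ α j) (hαsum : ∑ j, α j ≤ e + f) :
    {y : Fin p0 ⊕ (Fin (p4 - 1) ⊕ Fin (p1 - 1)) → ℝ | Sum.elim y (fun j => (α j : ℝ)) ∈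
        polyP (batyrevA p0 p1 p2 p3 p4 b c) (batyrevH p0 p1 p2 p3 p4 d e f)} =
      slicePolyhedron (Sum.elim (fun i => if (i : ℕ) = 0 then -d else 0) 0)
        (f + ∑ i, b i * α (.inl i) + ∑ k, c k * α (.inr k))
        (∑ i, (b i + 1) * α (.inl i) + ∑ k, c k * α (.inr k)) := by
  have hαsum' : ∑ i, (α (.inl i) : ℝ) + ∑ k, (α (.inr k) : ℝ) ≤ e + f := by
    have : ((∑ j, α j : ℤ) : ℝ) ≤ ((e + f : ℤ) : ℝ) := by exact_mod_cast hαsum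
    simpa [Fintype.sum_sum_type] using this
  ext y
  simp only [polyP, slicePolyhedron, Set.mem_ofPred_eq, Fintype.sum_sum_type]
  constructor
  · intro h
    refine ⟨?_, ?_, ?_⟩
    · rintro (i | j | k)
      · have := h (.inl i)
        simp [batyrevA, batyrevH, Fin.val_inj] at this ⊢
        split_ifs at this ⊢ <;> linarith
      · simpa [batyrevA, batyrevH, Fin.val_inj] using h (.inr (.inl ⟨j + 1, by omega⟩))
      · simpa [batyrevA, batyrevH, Fin.val_inj] using h (.inr (.inr (.inl ⟨k + 1, by omega⟩)))
    · have := h (.inr (.inl ⟨0, by omega⟩))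
      simp [batyrevA, batyrevH] at this
      push_cast
      linarith
    · have := h (.inr (.inr (.inl ⟨0, by omega⟩)))
      simp [batyrevA, batyrevH] at this
      push_cast
      linarith
  · rintro ⟨hL, hF, hG⟩ (i | j | j | i | j)
    · have := hL (.inl i)
      simp [batyrevA, batyrevH, Fin.val_inj] at this ⊢
      split_ifs at this ⊢ <;> linarith
    · obtain h0 | ⟨k, hk⟩ := j.val_eq_zero_or_exists_val_eq_succ
      · simp [batyrevA, batyrevH, h0]
        push_cast at hF
        linarith
      · simpa [batyrevA, batyrevH, hk, Fin.val_inj] using hL (.inr (.inl k))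
    · obtain h0 | ⟨k, hk⟩ := j.val_eq_zero_or_exists_val_eq_succ
      · simp [batyrevA, batyrevH, h0]
        push_cast at hG
        linarith
      · simpa [batyrevA, batyrevH, hk, Fin.val_inj] using hL (.inr (.inr k))
    · simpa [batyrevA, batyrevH, Fin.val_inj] using hα (.inl i)
    · obtain h0 | ⟨k, hk⟩ := j.val_eq_zero_or_exists_val_eq_succ
      · simp [batyrevA, batyrevH, h0]
        linarith
      · simpa [batyrevA, batyrevH, hk, Fin.val_inj] using hα (.inr k)

end Batyrev

theorem batyrev_slice_lattice_general (p0 p1 p2 p3 p4 : ℕ)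
    (hp1 : 1 ≤ p1) (hp4 : 1 ≤ p4)
    (b : Fin p3 → ℤ) (c : Fin (p2 - 1) → ℤ)
    (d e f : ℤ)
    (α : Fin p3 ⊕ Fin (p2 - 1) → ℤ)
    (hα : ∀ j, 0 ≤ α j) (hαsum : ∑ j, α j ≤ e + f) :
    {y : (Fin p0 ⊕ (Fin (p4 - 1) ⊕ Fin (p1 - 1))) → ℝ |
        Sum.elim y (fun j => (α j : ℝ)) ∈
          polyP (batyrevA p0 p1 p2 p3 p4 b c) (batyrevH p0 p1 p2 p3 p4 d e f)} =
      convexHull ℝ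
        ({y : (Fin p0 ⊕ (Fin (p4 - 1) ⊕ Fin (p1 - 1))) → ℝ |
            Sum.elim y (fun j => (α j : ℝ)) ∈
              polyP (batyrevA p0 p1 p2 p3 p4 b c) (batyrevH p0 p1 p2 p3 p4 d e f)} ∩ intZ) := by
  rw [setOf_sum_elim_mem_polyP_eq_slicePolyhedron hp1 hp4 hα hαsum]
  exact isLatticeHull_slicePolyhedron _ _ _

/-- For every lattice point `α` of the projected simplex
(`α_j ≥ 0`, `∑_{j∈J} α_j ≤ e+f`), the slice of the Batyrev polytope
`P(A, h(d,e,f))` at `α` (identifying `ℝⁿ = ℝ^S × ℝ^J`) is a lattice polytope: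
it equals the convex hull of its set of integer points. -/
theorem batyrev_slice_lattice (p0 p1 p2 p3 p4 : ℕ)
    (hp0 : 1 ≤ p0) (hp1 : 1 ≤ p1) (hp2 : 1 ≤ p2) (hp3 : 1 ≤ p3) (hp4 : 1 ≤ p4)
    (b : Fin p3 → ℤ) (c : Fin (p2 - 1) → ℤ)
    (hb : ∀ i, 0 ≤ b i) (hc : ∀ k, 0 ≤ c k)
    (d e f : ℤ) (hd : 0 ≤ d) (he : 0 ≤ e) (hf : 0 ≤ f)
    (α : Fin p3 ⊕ Fin (p2 - 1) → ℤ)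
    (hα : ∀ j, 0 ≤ α j) (hαsum : ∑ j, α j ≤ e + f) :
    {y : (Fin p0 ⊕ (Fin (p4 - 1) ⊕ Fin (p1 - 1))) → ℝ |
        Sum.elim y (fun j => (α j : ℝ)) ∈
          polyP (batyrevA p0 p1 p2 p3 p4 b c) (batyrevH p0 p1 p2 p3 p4 d e f)} =
      convexHull ℝ
        ({y : (Fin p0 ⊕ (Fin (p4 - 1) ⊕ Fin (p1 - 1))) → ℝ |
            Sum.elim y (fun j => (α j : ℝ)) ∈
              polyP (batyrevA p0 p1 p2 p3 p4 b c) (batyrevH p0 p1 p2 p3 p4 d e f)} ∩ intZ) :=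
  batyrev_slice_lattice_general p0 p1 p2 p3 p4 hp1 hp4 b c d e f α hα hαsum
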